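/- arXiv:2205.06414 — 2 statements merged into one kernel-verified Lean document; each statement's English description precedes it below -/
import Mathlib

section
/- The quantum discord of the Werner-GHZ state ρ_w = c|ψ⟩⟨ψ| + (1−c)I₈/8, |ψ⟩ = (|000⟩+|111⟩)/√2, is Q(ρ_w) = (1/8)(1−c)log₂(1−c) + ((1+7c)/8)log₂(1+7c) − (1/4)(1+3c)log₂(1+3c), and this expression is nonnegative for all c ∈ [0,1]. -/
noncomputable def Qdiscord (c : ℝ) : ℝ :=
  (1/8) * (1 - c) * Real.logb 2 (1 - c) + ((1 + 7*c)/8) * Real.logb 2 (1 + 7*c)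
    - (1/4) * (1 + 3*c) * Real.logb 2 (1 + 3*c)

theorem Qdiscord_nonneg : ∀ c ∈ Set.Icc (0 : ℝ) 1, 0 ≤ Qdiscord c := by
  intro c hc
  obtain ⟨h0, h1⟩ := hc
  have ha : (0:ℝ) ≤ 1 - c := by linarith
  have hb : (0:ℝ) ≤ 1 + 7*c := by linarith
  have key := Real.convexOn_mul_log.2 (Set.mem_Ici.mpr ha) (Set.mem_Ici.mpr hb)
    (by norm_num : (0:ℝ) ≤ 1/2) (by norm_num : (0:ℝ) ≤ 1/2) (by norm_num)
  simp only [smul_eq_mul] at key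
  have hmid : (1/2) * (1 - c) + (1/2) * (1 + 7*c) = 1 + 3*c := by ring
  rw [hmid] at key
  have hQ : Qdiscord c =
      (((1-c)*Real.log (1-c) + (1+7*c)*Real.log (1+7*c)
        - 2*((1+3*c)*Real.log (1+3*c))) / Real.log 2) / 8 := by
    unfold Qdiscord Real.logb
    ring
  rw [hQ]
  have hlog2 : 0 < Real.log 2 := Real.log_pos (by norm_num)
  have hnum : 0 ≤ (1-c)*Real.log (1-c) + (1+7*c)*Real.log (1+7*c)
      - 2*((1+3*c)*Real.log (1+3*c)) := by linarith
  positivity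
end

section
/- For real numbers u, v, w, p with p > 0, u + w ≥ 0, v + w ≥ 0, γ₀ ≥ γ₁ > 0, and 1 + α₁ ± γ₁ > 0, the inequality ((−u−v+w)/γ₁)·log₂((1+α₁+γ₁)/(1+α₁−γ₁)) + ((u+v+w)/γ₀)·log₂((1+α₀+γ₀)/(1+α₀−γ₀)) ≥ (2w/γ₀)·log₂((1+α₁+γ₁)/(1+α₁−γ₁)) holds whenever additionally α₀ ≤ α₁, γ₀ ≥ γ₁, 1+α₀±γ₀ > 0, u+v ≥ 0, and w ≥ 0, and log₂((1+α₀+γ₀)/(1+α₀−γ₀)) ≥ log₂((1+α₁+γ₁)/(1+α₁−γ₁)) ≥ 0. -/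
open Real Set

private lemma convexF : ConvexOn ℝ (Set.Ico (0:ℝ) 1)
    (fun x => Real.log (1 + x) - Real.log (1 - x)) := by
  have hint : interior (Set.Ico (0:ℝ) 1) = Set.Ioo 0 1 := interior_Ico
  apply convexOn_of_hasDerivWithinAt2_nonneg (f' := fun x => (1+x)⁻¹ + (1-x)⁻¹)
      (f'' := fun x => (1-x)⁻¹ * (1-x)⁻¹ - (1+x)⁻¹ * (1+x)⁻¹) (convex_Ico 0 1)
  · apply ContinuousOn.sub
    · exact (Real.continuousOn_log.comp (by fun_prop) (fun x hx => by
        simp only [Set.mem_Ico] at hx; intro h; simp at h; nlinarith [hx.1]))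
    · exact (Real.continuousOn_log.comp (by fun_prop) (fun x hx => by
        simp only [Set.mem_Ico] at hx; intro h; simp at h; nlinarith [hx.2]))
  · intro x hx
    rw [hint] at hx ⊢
    obtain ⟨hx0, hx1⟩ := hx
    have h1 : (0:ℝ) < 1 + x := by linarith
    have h2 : (0:ℝ) < 1 - x := by linarith
    have d1 : HasDerivAt (fun x : ℝ => Real.log (1 + x)) ((1+x)⁻¹) x := by
      have := ((hasDerivAt_id x).const_add 1).log h1.ne'
      simpa using this
    have d2 : HasDerivAt (fun x : ℝ => Real.log (1 - x)) (-(1-x)⁻¹) x := by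
      have := ((hasDerivAt_id x).const_sub 1).log h2.ne'
      simpa [div_eq_mul_inv] using this
    have := (d1.fun_sub d2)
    simpa [sub_neg_eq_add] using this.hasDerivWithinAt
  · intro x hx
    rw [hint] at hx ⊢
    obtain ⟨hx0, hx1⟩ := hx
    have h1 : (0:ℝ) < 1 + x := by linarith
    have h2 : (0:ℝ) < 1 - x := by linarith
    have d1 : HasDerivAt (fun x : ℝ => (1+x)⁻¹) (-((1+x)⁻¹*(1+x)⁻¹)) x := by
      have h := ((hasDerivAt_id x).const_add 1).fun_inv h1.ne'
      convert! h using 1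
      simp only [id]
      field_simp
    have d2 : HasDerivAt (fun x : ℝ => (1-x)⁻¹) ((1-x)⁻¹*(1-x)⁻¹) x := by
      have h := ((hasDerivAt_id x).const_sub 1).fun_inv h2.ne'
      convert! h using 1
      simp only [id]
      field_simp
    have := d1.add d2
    have heq : -((1+x)⁻¹*(1+x)⁻¹) + (1-x)⁻¹*(1-x)⁻¹
        = (1-x)⁻¹ * (1-x)⁻¹ - (1+x)⁻¹ * (1+x)⁻¹ := by ring
    rw [heq] at this
    exact this.hasDerivWithinAt
  · intro x hx
    rw [hint] at hx
    obtain ⟨hx0, hx1⟩ := hx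
    have h1 : (0:ℝ) < 1 + x := by linarith
    have h2 : (0:ℝ) < 1 - x := by linarith
    have hle : (1+x)⁻¹ ≤ (1-x)⁻¹ := inv_anti₀ h2 (by linarith)
    have h1' : (0:ℝ) ≤ (1+x)⁻¹ := by positivity
    nlinarith

/-- slope inequality: for 0 < a ≤ b < 1, log((1+a)/(1-a))/a ≤ log((1+b)/(1-b))/b,
stated multiplied out. -/
private lemma slope_ineq {a b : ℝ} (ha : 0 < a) (hab : a ≤ b) (hb : b < 1) :
    Real.log ((1+a)/(1-a)) ≤ (a/b) * Real.log ((1+b)/(1-b)) := by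
  have hb0 : 0 < b := lt_of_lt_of_le ha hab
  have ha1 : a < 1 := lt_of_le_of_lt hab hb
  have hmem0 : (0:ℝ) ∈ Set.Ico (0:ℝ) 1 := by constructor <;> norm_num
  have hmemb : b ∈ Set.Ico (0:ℝ) 1 := ⟨hb0.le, hb⟩
  have hθ1 : (0:ℝ) ≤ 1 - a/b := by
    have : a/b ≤ 1 := (div_le_one hb0).2 hab
    linarith
  have hθ2 : (0:ℝ) ≤ a/b := by positivity
  have hsum : (1 - a/b) + a/b = 1 := by ring
  have := convexF.2 hmem0 hmemb hθ1 hθ2 hsum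
  simp only [smul_eq_mul, mul_zero, zero_add, mul_one] at this
  have hab' : a/b * b = a := div_mul_cancel₀ a hb0.ne'
  rw [hab'] at this
  have e1 : Real.log ((1+a)/(1-a)) = Real.log (1+a) - Real.log (1-a) :=
    Real.log_div (by linarith) (by linarith)
  have e2 : Real.log ((1+b)/(1-b)) = Real.log (1+b) - Real.log (1-b) :=
    Real.log_div (by linarith) (by linarith)
  rw [e1, e2]
  simpa using this

theorem key_inequality (u v w p α₀ α₁ γ₀ γ₁ : ℝ)
    (hp : 0 < p) (huw : 0 ≤ u + w) (hvw : 0 ≤ v + w)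
    (hγ : γ₀ ≥ γ₁) (hγ1 : 0 < γ₁)
    (h1p : 0 < 1 + α₁ + γ₁) (h1m : 0 < 1 + α₁ - γ₁)
    (hα : α₀ ≤ α₁)
    (h0p : 0 < 1 + α₀ + γ₀) (h0m : 0 < 1 + α₀ - γ₀)
    (huv : 0 ≤ u + v) (hw : 0 ≤ w)
    (hlog : Real.logb 2 ((1 + α₀ + γ₀) / (1 + α₀ - γ₀)) ≥
      Real.logb 2 ((1 + α₁ + γ₁) / (1 + α₁ - γ₁)))
    (hlog0 : 0 ≤ Real.logb 2 ((1 + α₁ + γ₁) / (1 + α₁ - γ₁))) :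
    ((-u - v + w) / γ₁) * Real.logb 2 ((1 + α₁ + γ₁) / (1 + α₁ - γ₁)) +
      ((u + v + w) / γ₀) * Real.logb 2 ((1 + α₀ + γ₀) / (1 + α₀ - γ₀)) ≥
    (2 * w / γ₀) * Real.logb 2 ((1 + α₁ + γ₁) / (1 + α₁ - γ₁)) := by
  have hγ0 : 0 < γ₀ := lt_of_lt_of_le hγ1 hγ
  have hα0 : (0:ℝ) < 1 + α₀ := by linarith
  have hα1 : (0:ℝ) < 1 + α₁ := by linarith
  set B1 := Real.logb 2 ((1 + α₁ + γ₁) / (1 + α₁ - γ₁)) with hB1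
  set B0 := Real.logb 2 ((1 + α₀ + γ₀) / (1 + α₀ - γ₀)) with hB0
  -- key: γ₀ * B1 ≤ γ₁ * B0
  have key : γ₀ * B1 ≤ γ₁ * B0 := by
    set a := γ₁ / (1 + α₁) with haa
    set b := γ₀ / (1 + α₀) with hbb
    have ha : 0 < a := by positivity
    have hb1 : b < 1 := (div_lt_one hα0).2 (by linarith)
    have hab : a ≤ b := by
      rw [haa, hbb, div_le_div_iff₀ hα1 hα0]
      nlinarith
    have hra : (1 + α₁ + γ₁) / (1 + α₁ - γ₁) = (1+a)/(1-a) := by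
      rw [haa]; field_simp
    have hrb : (1 + α₀ + γ₀) / (1 + α₀ - γ₀) = (1+b)/(1-b) := by
      rw [hbb]; field_simp
    have hs := slope_ineq ha hab hb1
    have hb0 : 0 < b := lt_of_lt_of_le ha hab
    have hlog0' : 0 ≤ Real.log ((1+b)/(1-b)) := by
      apply Real.log_nonneg
      rw [le_div_iff₀ (by linarith)]
      nlinarith
    -- a/b ≤ γ₁/γ₀
    have hfrac : a / b ≤ γ₁ / γ₀ := by
      rw [haa, hbb, div_le_div_iff₀ (by positivity) hγ0]
      have e1 : γ₁ / (1 + α₁) * γ₀ = γ₁ * γ₀ / (1 + α₁) := by ring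
      have e2 : γ₁ * (γ₀ / (1 + α₀)) = γ₁ * γ₀ / (1 + α₀) := by ring
      rw [e1, e2]
      gcongr <;> linarith
    have h2 : Real.log ((1+a)/(1-a)) ≤ (γ₁/γ₀) * Real.log ((1+b)/(1-b)) := by
      calc Real.log ((1+a)/(1-a)) ≤ (a/b) * Real.log ((1+b)/(1-b)) := hs
        _ ≤ (γ₁/γ₀) * Real.log ((1+b)/(1-b)) :=
          mul_le_mul_of_nonneg_right hfrac hlog0'
    have h3 : γ₀ * Real.log ((1+a)/(1-a)) ≤ γ₁ * Real.log ((1+b)/(1-b)) := by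
      have := mul_le_mul_of_nonneg_left h2 hγ0.le
      calc γ₀ * Real.log ((1+a)/(1-a)) ≤ γ₀ * (γ₁/γ₀ * Real.log ((1+b)/(1-b))) := this
        _ = γ₁ * Real.log ((1+b)/(1-b)) := by field_simp
    rw [hB1, hB0, Real.logb, Real.logb, hra, hrb]
    have hl2 : (0:ℝ) < Real.log 2 := Real.log_pos (by norm_num)
    rw [mul_div_assoc', mul_div_assoc']
    exact div_le_div_of_nonneg_right h3 hl2.le
  -- final combination
  have H : 0 ≤ (w - (u+v)) * γ₀ * B1 + (u+v+w) * γ₁ * B0 - 2*w*γ₁*B1 := by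
    rcases le_total (u+v) w with hcase | hcase
    · nlinarith [mul_nonneg (mul_nonneg (sub_nonneg.2 hcase) (sub_nonneg.2 hγ)) hlog0,
        mul_nonneg (mul_nonneg (by linarith : (0:ℝ) ≤ u+v+w) hγ1.le) (sub_nonneg.2 hlog)]
    · nlinarith [mul_nonneg (sub_nonneg.2 hcase) (sub_nonneg.2 key),
        mul_nonneg (mul_nonneg hw hγ1.le) (sub_nonneg.2 hlog)]
  rw [ge_iff_le, ← sub_nonneg]
  have e : ((-u - v + w) / γ₁) * B1 + ((u + v + w) / γ₀) * B0 - (2 * w / γ₀) * B1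
      = ((w - (u+v)) * γ₀ * B1 + (u+v+w) * γ₁ * B0 - 2*w*γ₁*B1) / (γ₀ * γ₁) := by
    field_simp
    ring
  rw [e]
  exact div_nonneg H (by positivity)
end
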